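/- arXiv:2207.04421 — 3 statements merged into one kernel-verified Lean document; each statement's English description precedes it below -/
import Mathlib

section
/- Let a ∈ PB be a basis of the integer polymatroid P. An index i ∈ [n] is internally active with respect to a if and only if there exists a nonempty subset I ⊆ [n] such that i = min(I) and the complement [n] ∖ I is tight for a. -/
open Finset

variable {n : ℕ}

/-- The set of bases of the integer polymatroid with rank function `f` on ground set `Fin n`:
integer vectors `a` with `a i ≥ 0`, `∑_{i ∈ I} a i ≤ f I` for every `I`, and `∑ i, a i = f [n]`.
(The upper bound `a i ≤ f {i}` used for the ambient finite set is implied by the constraints.) -/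
noncomputable def PB (n : ℕ) (f : Finset (Fin n) → ℕ) : Finset (Fin n → ℤ) :=
  (Fintype.piFinset fun i : Fin n => Finset.Icc (0 : ℤ) (f {i})).filter fun a =>
    (∀ I : Finset (Fin n), ∑ j ∈ I, a j ≤ (f I : ℤ)) ∧ ∑ j, a j = (f Finset.univ : ℤ)

/-- A set `I` is tight for `a` if `∑_{i ∈ I} a i = f I`. -/
def Tight (f : Finset (Fin n) → ℕ) (a : Fin n → ℤ) (I : Finset (Fin n)) : Prop :=
  ∑ i ∈ I, a i = (f I : ℤ)

/-- `i` is internally active with respect to `a`: `a - e_i + e_j ∉ PB` for every `j < i`. -/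
def IntAct (f : Finset (Fin n) → ℕ) (a : Fin n → ℤ) (i : Fin n) : Prop :=
  ∀ j : Fin n, j < i → a - Pi.single i 1 + Pi.single j 1 ∉ PB n f

/-- `i` is externally active with respect to `a`: `a + e_i - e_j ∉ PB` for every `j < i`. -/
def ExtAct (f : Finset (Fin n) → ℕ) (a : Fin n → ℤ) (i : Fin n) : Prop :=
  ∀ j : Fin n, j < i → a + Pi.single i 1 - Pi.single j 1 ∉ PB n f

open scoped Classical in
/-- `Int(a)`: the set of internally active indices. -/
noncomputable def IntSet (f : Finset (Fin n) → ℕ) (a : Fin n → ℤ) : Finset (Fin n) :=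
  Finset.univ.filter fun i => IntAct f a i

open scoped Classical in
/-- `Ext(a)`: the set of externally active indices. -/
noncomputable def ExtSet (f : Finset (Fin n) → ℕ) (a : Fin n → ℤ) : Finset (Fin n) :=
  Finset.univ.filter fun i => ExtAct f a i

/-- `ι(a) = |Int(a)|`, the internal activity. -/
noncomputable def iota (f : Finset (Fin n) → ℕ) (a : Fin n → ℤ) : ℕ := (IntSet f a).card

/-- `ε(a) = |Ext(a)|`, the external activity. -/
noncomputable def eps (f : Finset (Fin n) → ℕ) (a : Fin n → ℤ) : ℕ := (ExtSet f a).card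

/-! For `a_i > 0`, the exchange `a - e_i + e_j` is again a basis unless some tight set contains
`j` but not `i`. By submodularity tight sets are closed under unions, so `i` is internally active
iff a single tight set avoids `i` and contains every `j < i`; its complement is the required `I`.
When `a_i = 0` no exchange is possible, and `[n] ∖ {i}` is tight by monotonicity. -/

section Exchange

variable {f : Finset (Fin n) → ℕ} {a : Fin n → ℤ}

theorem mem_PB_iff {b : Fin n → ℤ} :
    b ∈ PB n f ↔
      (∀ k, 0 ≤ b k) ∧ (∀ I, ∑ j ∈ I, b j ≤ (f I : ℤ)) ∧ ∑ j, b j = (f univ : ℤ) := by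
  simp only [PB, mem_filter, Fintype.mem_piFinset, mem_Icc]
  constructor
  · rintro ⟨hbox, hle, hsum⟩
    exact ⟨fun k => (hbox k).1, hle, hsum⟩
  · rintro ⟨hnonneg, hle, hsum⟩
    exact ⟨fun k => ⟨hnonneg k, by simpa using hle {k}⟩, hle, hsum⟩

theorem sum_le_of_mem_PB (ha : a ∈ PB n f) (I : Finset (Fin n)) : ∑ j ∈ I, a j ≤ (f I : ℤ) :=
  (mem_PB_iff.1 ha).2.1 I

theorem sum_exchange (a : Fin n → ℤ) (i j : Fin n) (J : Finset (Fin n)) :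
    ∑ k ∈ J, (a - Pi.single i 1 + Pi.single j 1 : Fin n → ℤ) k
      = ∑ k ∈ J, a k - (if i ∈ J then 1 else 0) + (if j ∈ J then 1 else 0) := by
  simp only [Pi.add_apply, Pi.sub_apply, sum_add_distrib, sum_sub_distrib, sum_pi_single']

theorem tight_empty (hf0 : f ∅ = 0) : Tight f a ∅ := by
  simp [Tight, hf0]

theorem Tight.union (hsub : ∀ I J : Finset (Fin n), f (I ∪ J) + f (I ∩ J) ≤ f I + f J)
    (ha : a ∈ PB n f) {A B : Finset (Fin n)} (hA : Tight f a A) (hB : Tight f a B) :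
    Tight f a (A ∪ B) := by
  have hunion := sum_le_of_mem_PB ha (A ∪ B)
  have hinter := sum_le_of_mem_PB ha (A ∩ B)
  have hmod : ∑ j ∈ A ∪ B, a j + ∑ j ∈ A ∩ B, a j = ∑ j ∈ A, a j + ∑ j ∈ B, a j :=
    sum_union_inter
  have hsubAB : (f (A ∪ B) : ℤ) + f (A ∩ B) ≤ f A + f B := by exact_mod_cast hsub A B
  unfold Tight at *
  linarith

theorem exists_tight_superset_of_forall (hf0 : f ∅ = 0)
    (hsub : ∀ I J : Finset (Fin n), f (I ∪ J) + f (I ∩ J) ≤ f I + f J)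
    (ha : a ∈ PB n f) {i : Fin n} (K : Finset (Fin n))
    (hK : ∀ j ∈ K, ∃ S, j ∈ S ∧ i ∉ S ∧ Tight f a S) :
    ∃ S, K ⊆ S ∧ i ∉ S ∧ Tight f a S := by
  classical
  induction K using Finset.induction_on with
  | empty => exact ⟨∅, subset_refl _, notMem_empty i, tight_empty hf0⟩
  | insert x K _ ih =>
    obtain ⟨S, hKS, hiS, hS⟩ := ih fun j hj => hK j (mem_insert_of_mem hj)
    obtain ⟨Sx, hxSx, hiSx, hSx⟩ := hK x (mem_insert_self x K)
    refine ⟨Sx ∪ S, insert_subset (mem_union_left S hxSx) (hKS.trans subset_union_right),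
      by simp [hiS, hiSx], hSx.union hsub ha hS⟩

theorem exchange_notMem_PB {S : Finset (Fin n)} {i j : Fin n} (hS : Tight f a S)
    (hjS : j ∈ S) (hiS : i ∉ S) : a - Pi.single i 1 + Pi.single j 1 ∉ PB n f := by
  intro hb
  have hle := sum_le_of_mem_PB hb S
  rw [sum_exchange, if_neg hiS, if_pos hjS, hS] at hle
  omega

theorem exchange_mem_PB (ha : a ∈ PB n f) {i j : Fin n} (hai : 0 < a i)
    (hnt : ∀ S, j ∈ S → i ∉ S → ¬ Tight f a S) :
    a - Pi.single i 1 + Pi.single j 1 ∈ PB n f := by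
  obtain ⟨hnonneg, hle, hsum⟩ := mem_PB_iff.1 ha
  refine mem_PB_iff.2 ⟨fun k => ?_, fun J => ?_, ?_⟩
  · have hk := hnonneg k
    simp only [Pi.add_apply, Pi.sub_apply, Pi.single_apply]
    split_ifs with hki <;> subst_vars <;> omega
  · have hJ := hle J
    rw [sum_exchange]
    by_cases hjJ : j ∈ J
    · by_cases hiJ : i ∈ J
      · simp only [if_pos hiJ, if_pos hjJ]
        omega
      · -- by integrality, a set that is not tight has slack at least one
        have hslack : ∑ k ∈ J, a k ≠ f J := hnt J hjJ hiJ
        simp only [if_neg hiJ, if_pos hjJ]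
        omega
    · split_ifs <;> omega
  · rw [sum_exchange]
    simp [hsum]

theorem tight_compl_singleton_of_eq_zero (hmono : ∀ I J : Finset (Fin n), I ⊆ J → f I ≤ f J)
    (ha : a ∈ PB n f) {i : Fin n} (hai : a i = 0) : Tight f a {i}ᶜ := by
  have hsplit : ∑ j ∈ {i}ᶜ, a j + ∑ j ∈ {i}, a j = ∑ j, a j := sum_compl_add_sum _ _
  have hle := sum_le_of_mem_PB ha {i}ᶜ
  have hmono' : (f {i}ᶜ : ℤ) ≤ f univ := by exact_mod_cast hmono _ _ (subset_univ _)
  rw [sum_singleton, hai, (mem_PB_iff.1 ha).2.2] at hsplit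
  unfold Tight
  omega

end Exchange

theorem internallyActive_iff_general
    (n : ℕ) (f : Finset (Fin n) → ℕ)
    (hf0 : f ∅ = 0)
    (hmono : ∀ I J : Finset (Fin n), I ⊆ J → f I ≤ f J)
    (hsub : ∀ I J : Finset (Fin n), f (I ∪ J) + f (I ∩ J) ≤ f I + f J)
    (a : Fin n → ℤ) (ha : a ∈ PB n f) (i : Fin n) :
    IntAct f a i ↔
      ∃ I : Finset (Fin n), i ∈ I ∧ (∀ j ∈ I, i ≤ j) ∧ Tight f a Iᶜ := by
  constructor
  · intro hact
    rcases ((mem_PB_iff.1 ha).1 i).eq_or_lt with hai | hai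
    · exact ⟨{i}, mem_singleton_self i, by simp,
        tight_compl_singleton_of_eq_zero hmono ha hai.symm⟩
    have hsep : ∀ j ∈ univ.filter (· < i), ∃ S, j ∈ S ∧ i ∉ S ∧ Tight f a S := by
      intro j hj
      by_contra! hnt
      exact hact j (mem_filter.1 hj).2 (exchange_mem_PB ha hai hnt)
    obtain ⟨S, hKS, hiS, hS⟩ := exists_tight_superset_of_forall hf0 hsub ha _ hsep
    refine ⟨Sᶜ, mem_compl.2 hiS, fun j hj => ?_, by rwa [compl_compl]⟩
    by_contra! hji
    exact mem_compl.1 hj (hKS (by simpa using hji))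
  · rintro ⟨I, hiI, hmin, hI⟩ j hji
    exact exchange_notMem_PB hI (mem_compl.2 fun hjI => (hmin j hjI).not_gt hji)
      (by simpa using hiI)

/-- `i` is internally active w.r.t. `a` iff there is a (nonempty) subset `I` with
`i = min I` whose complement is tight for `a`. -/
theorem internallyActive_iff
    (n : ℕ) (hn : 0 < n) (f : Finset (Fin n) → ℕ)
    (hf0 : f ∅ = 0)
    (hmono : ∀ I J : Finset (Fin n), I ⊆ J → f I ≤ f J)
    (hsub : ∀ I J : Finset (Fin n), f (I ∪ J) + f (I ∩ J) ≤ f I + f J)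
    (a : Fin n → ℤ) (ha : a ∈ PB n f) (i : Fin n) :
    IntAct f a i ↔
      ∃ I : Finset (Fin n), i ∈ I ∧ (∀ j ∈ I, i ≤ j) ∧ Tight f a Iᶜ :=
  internallyActive_iff_general n f hf0 hmono hsub a ha i
end

section
/- The coefficient of y^{n−1} in J_P(1, y) = Σ_{a ∈ PB} y^{ε(a)} equals Σ_{i ∈ [n]} f([n] ∖ {i}) − (n − 1)·f([n]); equivalently, the number of bases a ∈ PB with ε(a) = n − 1 is Σ_{i ∈ [n]} f([n] ∖ {i}) − (n − 1)·f([n]). -/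
open Finset

variable {n : ℕ}

/-!
Say that a basis `a` is almost active at `i` if every index other than `i` is externally active.
The greedy basis `g`, with `g k = f {j ≥ k} - f {j > k}`, is the only basis on which every index
is externally active, so the bases with `ε(a) = n - 1` are the almost active bases at some `i`
other than `g`, and `i` is then unique.

An almost active basis at `i` is determined by its value at `i`: at the last index where two of
them differ, a basis exchange would contradict activity. That value ranges over the interval
`[f [n] - f ([n] ∖ {i}), g i]`. The lower bound holds for every basis; the upper bound holds
because activity of the indices after `i` makes the final segment after `i` tight; and every value
in between is reached from `g` by repeatedly moving a unit from `i` to the largest `j < i` whose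
minimal tight set contains `i`, a move that preserves activity away from `i`. Summing the lengths
of these intervals minus one, with `∑ g i = f [n]`, gives the formula.
-/

theorem Finset.card_eq_card_sub_one_iff {α : Type*} [Fintype α] [DecidableEq α] [Nonempty α]
    {s : Finset α} : s.card = Fintype.card α - 1 ↔ ∃ i, s = univ.erase i := by
  constructor
  · intro hs
    have hcompl : sᶜ.card = 1 := by
      have := Fintype.card_pos (α := α)
      rw [card_compl]
      omega
    obtain ⟨i, hi⟩ := card_eq_one.1 hcompl
    exact ⟨i, by rw [← compl_singleton, ← hi, compl_compl]⟩
  · rintro ⟨i, rfl⟩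
    simp

def IsSubmodular {α : Type*} [DecidableEq α] (f : Finset α → ℕ) : Prop :=
  ∀ I J, f (I ∪ J) + f (I ∩ J) ≤ f I + f J

namespace Polymatroid

open scoped Classical

variable {f : Finset (Fin n) → ℕ} {a b : Fin n → ℤ} {I J S T W : Finset (Fin n)} {i j k l : Fin n}

theorem mem_PB_iff :
    a ∈ PB n f ↔ (∀ i, 0 ≤ a i) ∧ (∀ I, ∑ j ∈ I, a j ≤ (f I : ℤ)) ∧ ∑ j, a j = (f univ : ℤ) := by
  simp only [PB, mem_filter, Fintype.mem_piFinset, mem_Icc, forall_and]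
  exact ⟨fun ⟨⟨h0, _⟩, h⟩ => ⟨h0, h⟩,
    fun ⟨h0, hle, hsum⟩ => ⟨⟨h0, fun i => by simpa using hle {i}⟩, hle, hsum⟩⟩

theorem nonneg_of_mem_PB (ha : a ∈ PB n f) (i : Fin n) : 0 ≤ a i := (mem_PB_iff.1 ha).1 i

theorem sum_le_of_mem_PB (ha : a ∈ PB n f) (I : Finset (Fin n)) : ∑ j ∈ I, a j ≤ (f I : ℤ) :=
  (mem_PB_iff.1 ha).2.1 I

theorem tight_univ (ha : a ∈ PB n f) : Tight f a univ := (mem_PB_iff.1 ha).2.2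

theorem tight_empty (hf0 : f ∅ = 0) : Tight f a ∅ := by simp [Tight, hf0]

theorem tight_union_inter (hsub : IsSubmodular f) (ha : a ∈ PB n f) (hI : Tight f a I)
    (hJ : Tight f a J) : Tight f a (I ∪ J) ∧ Tight f a (I ∩ J) := by
  have hsum := sum_union_inter (s₁ := I) (s₂ := J) (f := a)
  have hunion := sum_le_of_mem_PB ha (I ∪ J)
  have hinter := sum_le_of_mem_PB ha (I ∩ J)
  have hf : (f (I ∪ J) : ℤ) + f (I ∩ J) ≤ f I + f J := by exact_mod_cast hsub I J
  unfold Tight at *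
  omega

theorem tight_of_subset_of_eq_zero_on_sdiff (hmono : Monotone f) (ha : a ∈ PB n f)
    (hW : Tight f a W) (hSW : S ⊆ W) (hzero : ∀ l ∈ W \ S, a l = 0) : Tight f a S := by
  have hsum := sum_sdiff hSW (f := a)
  rw [sum_eq_zero hzero, zero_add, hW] at hsum
  have hle := sum_le_of_mem_PB ha S
  have hf : (f S : ℤ) ≤ f W := by exact_mod_cast hmono hSW
  unfold Tight
  omega

noncomputable def minTight (f : Finset (Fin n) → ℕ) (a : Fin n → ℤ) (k : Fin n) :
    Finset (Fin n) :=
  (univ.filter fun T => Tight f a T ∧ k ∈ T).inf id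

theorem mem_minTight : l ∈ minTight f a k ↔ ∀ T, Tight f a T → k ∈ T → l ∈ T := by
  simp [minTight, mem_inf]

theorem mem_minTight_self : k ∈ minTight f a k := mem_minTight.2 fun _ _ hk => hk

theorem minTight_subset (hT : Tight f a T) (hk : k ∈ T) : minTight f a k ⊆ T :=
  fun _ hl => mem_minTight.1 hl T hT hk

theorem tight_minTight (hsub : IsSubmodular f) (ha : a ∈ PB n f) : Tight f a (minTight f a k) :=
  inf_induction (p := Tight f a) (by simpa using tight_univ ha)
    (fun _ h₁ _ h₂ => (tight_union_inter hsub ha h₁ h₂).2)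
    fun _ hT => (mem_filter.1 hT).2.1

theorem minTight_subset_of_mem (hsub : IsSubmodular f) (ha : a ∈ PB n f)
    (hl : l ∈ minTight f a k) : minTight f a l ⊆ minTight f a k :=
  minTight_subset (tight_minTight hsub ha) hl

theorem tight_of_forall_minTight_subset (hf0 : f ∅ = 0) (hsub : IsSubmodular f)
    (ha : a ∈ PB n f) (h : ∀ k ∈ S, minTight f a k ⊆ S) : Tight f a S := by
  have hS : S = S.sup (minTight f a) :=
    le_antisymm (fun k hk => mem_sup.2 ⟨k, hk, mem_minTight_self⟩) (Finset.sup_le h)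
  rw [hS]
  exact sup_induction (p := Tight f a) (tight_empty hf0)
    (fun _ h₁ _ h₂ => (tight_union_inter hsub ha h₁ h₂).1)
    fun _ _ => tight_minTight hsub ha

theorem sum_add_single_sub_single (a : Fin n → ℤ) (k l : Fin n) (I : Finset (Fin n)) :
    ∑ x ∈ I, (a + Pi.single k 1 - Pi.single l 1 : Fin n → ℤ) x =
      ∑ x ∈ I, a x + (if k ∈ I then 1 else 0) - (if l ∈ I then 1 else 0) := by
  simp only [Pi.add_apply, Pi.sub_apply, sum_sub_distrib, sum_add_distrib, sum_pi_single']

theorem tight_add_single_sub_single (hT : Tight f a T) (h : k ∈ T ↔ l ∈ T) :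
    Tight f (a + Pi.single k 1 - Pi.single l 1) T := by
  unfold Tight at *
  rw [sum_add_single_sub_single, hT]
  simp only [h]
  split_ifs <;> ring

theorem add_single_sub_single_mem_PB_iff (ha : a ∈ PB n f) (hkl : k ≠ l) :
    a + Pi.single k 1 - Pi.single l 1 ∈ PB n f ↔ 0 < a l ∧ l ∈ minTight f a k := by
  constructor
  · intro hb
    refine ⟨?_, mem_minTight.2 fun T hT hkT => ?_⟩
    · have := nonneg_of_mem_PB hb l
      simp only [Pi.add_apply, Pi.sub_apply, Pi.single_eq_same, Pi.single_eq_of_ne hkl.symm] at this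
      omega
    · by_contra hlT
      have := sum_le_of_mem_PB hb T
      rw [sum_add_single_sub_single, if_pos hkT, if_neg hlT, hT] at this
      omega
  · rintro ⟨hal, hlk⟩
    refine mem_PB_iff.2 ⟨fun x => ?_, fun I => ?_, ?_⟩
    · have := nonneg_of_mem_PB ha x
      simp only [Pi.add_apply, Pi.sub_apply, Pi.single_apply]
      split_ifs with hxk hxl <;> subst_vars <;> omega
    · rw [sum_add_single_sub_single]
      have hle := sum_le_of_mem_PB ha I
      by_cases hkI : k ∈ I
      · by_cases hlI : l ∈ I
        · simp only [if_pos hkI, if_pos hlI]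
          omega
        · have hnt : ¬ Tight f a I := fun hI => hlI (mem_minTight.1 hlk I hI hkI)
          unfold Tight at hnt
          simp only [if_pos hkI, if_neg hlI]
          omega
      · simp only [if_neg hkI]
        split_ifs <;> omega
    · rw [sum_add_single_sub_single, if_pos (mem_univ k), if_pos (mem_univ l), tight_univ ha]
      ring

theorem extAct_iff (ha : a ∈ PB n f) :
    ExtAct f a k ↔ ∀ l < k, 0 < a l → l ∉ minTight f a k := by
  unfold ExtAct
  refine forall₂_congr fun l hlk => ?_
  rw [add_single_sub_single_mem_PB_iff ha hlk.ne', not_and]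

theorem apply_eq_zero_of_extAct (ha : a ∈ PB n f) (hk : ExtAct f a k) (hl : l ∈ minTight f a k)
    (hlk : l < k) : a l = 0 :=
  le_antisymm (not_lt.1 fun hpos => (extAct_iff ha).1 hk l hlk hpos hl) (nonneg_of_mem_PB ha l)

theorem exists_gt_ne_of_extAct (hsub : IsSubmodular f) (ha : a ∈ PB n f) (hb : b ∈ PB n f)
    (hk : ExtAct f a k) (hab : a k < b k) : ∃ l, k < l ∧ a l ≠ b l := by
  obtain ⟨l, hlT, hl⟩ : ∃ l ∈ minTight f a k, b l < a l := by
    by_contra! h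
    have hlt := sum_lt_sum h ⟨k, mem_minTight_self, hab⟩
    have hle := sum_le_of_mem_PB hb (minTight f a k)
    have hT : Tight f a (minTight f a k) := tight_minTight hsub ha
    unfold Tight at hT
    omega
  have hkl : k ≤ l := not_lt.1 fun hlk =>
    (extAct_iff ha).1 hk l hlk (by linarith [nonneg_of_mem_PB hb l]) hlT
  exact ⟨l, hkl.lt_of_ne (by rintro rfl; exact hab.not_gt hl), hl.ne'⟩

theorem eq_of_forall_extAct_of_apply_eq (hsub : IsSubmodular f) (ha : a ∈ PB n f)
    (hb : b ∈ PB n f) (hA : ∀ k, k ≠ i → ExtAct f a k) (hB : ∀ k, k ≠ i → ExtAct f b k)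
    (hi : a i = b i) : a = b := by
  by_contra hne
  obtain ⟨k, hk, hmax⟩ := (univ.filter fun k => a k ≠ b k).exists_max_image id <| by
    obtain ⟨k, hk⟩ := Function.ne_iff.1 hne
    exact ⟨k, by simpa using hk⟩
  simp only [mem_filter, mem_univ, true_and, id] at hk hmax
  have hki : k ≠ i := by rintro rfl; exact hk hi
  obtain ⟨l, hkl, hl⟩ := hk.lt_or_gt.elim (exists_gt_ne_of_extAct hsub ha hb (hA k hki))
    fun h => (exists_gt_ne_of_extAct hsub hb ha (hB k hki) h).imp fun _ => And.imp_right Ne.symm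
  exact (hmax l hl).not_gt hkl

def suffix (n m : ℕ) : Finset (Fin n) := univ.filter fun j => m ≤ (j : ℕ)

theorem mem_suffix {m : ℕ} : j ∈ suffix n m ↔ m ≤ (j : ℕ) := by simp [suffix]

theorem suffix_zero : suffix n 0 = univ := by ext; simp [mem_suffix]

theorem suffix_self : suffix n n = ∅ := by ext j; simp [mem_suffix, j.isLt]

theorem suffix_eq_insert {m : ℕ} (hm : m < n) :
    suffix n m = insert ⟨m, hm⟩ (suffix n (m + 1)) := by
  ext j
  simp only [mem_suffix, mem_insert, Fin.ext_iff]
  omega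

theorem suffix_succ_subset {m : ℕ} : suffix n (m + 1) ⊆ suffix n m :=
  fun _ hj => mem_suffix.2 (by have := mem_suffix.1 hj; omega)

theorem sum_suffix {m : ℕ} (hm : m < n) (b : Fin n → ℤ) :
    ∑ j ∈ suffix n m, b j = b ⟨m, hm⟩ + ∑ j ∈ suffix n (m + 1), b j := by
  rw [suffix_eq_insert hm, sum_insert (by simp [mem_suffix])]

/-- `minTight` of the index `m` adds to the next final segment only indices where `a`
vanishes. -/
theorem tight_suffix (hf0 : f ∅ = 0) (hmono : Monotone f) (hsub : IsSubmodular f)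
    (ha : a ∈ PB n f) {m : ℕ} (hm : m ≤ n) (hact : ∀ k : Fin n, m ≤ (k : ℕ) → ExtAct f a k) :
    Tight f a (suffix n m) := by
  induction hm using Nat.decreasingInduction with
  | self => rw [suffix_self]; exact tight_empty hf0
  | of_succ m hm ih =>
    have hW := (tight_union_inter hsub ha (tight_minTight (k := ⟨m, hm⟩) hsub ha)
      (ih fun k hk => hact k (by omega))).1
    refine tight_of_subset_of_eq_zero_on_sdiff hmono ha hW ?_ fun l hl => ?_
    · rw [suffix_eq_insert hm]
      exact insert_subset (mem_union_left _ mem_minTight_self) subset_union_right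
    · simp only [mem_sdiff, mem_union, mem_suffix] at hl
      obtain ⟨hlT | hlm, hl⟩ := hl
      · exact apply_eq_zero_of_extAct ha (hact _ le_rfl) hlT (Fin.lt_def.2 (by simp; omega))
      · omega

noncomputable def greedy (f : Finset (Fin n) → ℕ) (k : Fin n) : ℤ :=
  f (suffix n k) - f (suffix n (k + 1))

theorem sum_greedy_suffix (hf0 : f ∅ = 0) {m : ℕ} (hm : m ≤ n) :
    ∑ j ∈ suffix n m, greedy f j = f (suffix n m) := by
  induction hm using Nat.decreasingInduction with
  | self => simp [suffix_self, hf0]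
  | of_succ m hm ih =>
    rw [sum_suffix hm, ih, greedy]
    ring

theorem sum_greedy (hf0 : f ∅ = 0) : ∑ j, greedy f j = f univ := by
  simpa [suffix_zero] using sum_greedy_suffix (f := f) hf0 (Nat.zero_le n)

theorem sum_inter_suffix_greedy_le (hsub : IsSubmodular f) (I : Finset (Fin n)) {m : ℕ}
    (hm : m ≤ n) : ∑ j ∈ I ∩ suffix n m, greedy f j ≤ f (I ∩ suffix n m) := by
  induction hm using Nat.decreasingInduction with
  | self => simp [suffix_self]
  | of_succ m hm ih =>
    by_cases hmI : (⟨m, hm⟩ : Fin n) ∈ I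
    · have hunion : I ∩ suffix n m ∪ suffix n (m + 1) = suffix n m := by
        rw [suffix_eq_insert hm, inter_insert_of_mem hmI, insert_union,
          union_eq_right.2 inter_subset_right]
      have hinter : I ∩ suffix n m ∩ suffix n (m + 1) = I ∩ suffix n (m + 1) := by
        rw [inter_assoc, inter_eq_right.2 suffix_succ_subset]
      have hf : (f (suffix n m) : ℤ) + f (I ∩ suffix n (m + 1)) ≤
          f (I ∩ suffix n m) + f (suffix n (m + 1)) := by
        exact_mod_cast hunion ▸ hinter ▸ hsub (I ∩ suffix n m) (suffix n (m + 1))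
      rw [suffix_eq_insert hm, inter_insert_of_mem hmI, sum_insert (by simp [mem_suffix]),
        ← inter_insert_of_mem hmI, ← suffix_eq_insert hm, greedy]
      linarith
    · rwa [suffix_eq_insert hm, inter_insert_of_notMem hmI]

theorem greedy_mem_PB (hf0 : f ∅ = 0) (hmono : Monotone f) (hsub : IsSubmodular f) :
    greedy f ∈ PB n f := by
  refine mem_PB_iff.2 ⟨fun k => ?_, fun I => ?_, sum_greedy hf0⟩
  · have : f (suffix n (k + 1)) ≤ f (suffix n k) := hmono suffix_succ_subset
    simp only [greedy]
    omega
  · simpa [suffix_zero] using sum_inter_suffix_greedy_le hsub I (Nat.zero_le n)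

theorem extAct_greedy (hf0 : f ∅ = 0) (hmono : Monotone f) (hsub : IsSubmodular f)
    (k : Fin n) : ExtAct f (greedy f) k := by
  rw [extAct_iff (greedy_mem_PB hf0 hmono hsub)]
  intro l hlk _ hl
  have := mem_suffix.1 (minTight_subset (sum_greedy_suffix hf0 k.isLt.le) (mem_suffix.2 le_rfl) hl)
  exact absurd hlk (not_lt.2 (Fin.le_def.2 this))

theorem eq_greedy_of_forall_extAct (hf0 : f ∅ = 0) (hmono : Monotone f)
    (hsub : IsSubmodular f) (ha : a ∈ PB n f) (hact : ∀ k, ExtAct f a k) : a = greedy f := by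
  funext k
  have hk := tight_suffix hf0 hmono hsub ha k.isLt.le fun k' _ => hact k'
  have hk1 := tight_suffix (m := k + 1) hf0 hmono hsub ha k.isLt fun k' _ => hact k'
  unfold Tight at hk hk1
  rw [sum_suffix k.isLt, Fin.eta, hk1] at hk
  simp only [greedy]
  omega

noncomputable def almostActiveBases (f : Finset (Fin n) → ℕ) (i : Fin n) :
    Finset (Fin n → ℤ) :=
  (PB n f).filter fun a => ∀ k, k ≠ i → ExtAct f a k

theorem mem_almostActiveBases :
    a ∈ almostActiveBases f i ↔ a ∈ PB n f ∧ ∀ k, k ≠ i → ExtAct f a k := mem_filter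

theorem greedy_mem_almostActiveBases (hf0 : f ∅ = 0) (hmono : Monotone f)
    (hsub : IsSubmodular f) (i : Fin n) : greedy f ∈ almostActiveBases f i :=
  mem_almostActiveBases.2 ⟨greedy_mem_PB hf0 hmono hsub, fun k _ => extAct_greedy hf0 hmono hsub k⟩

theorem sum_compl_singleton (a : Fin n → ℤ) (i : Fin n) :
    ∑ j ∈ univ \ {i}, a j = ∑ j, a j - a i := by
  rw [← sum_sdiff (subset_univ {i}), sum_singleton]
  ring

theorem sub_le_apply_of_mem_PB (ha : a ∈ PB n f) (i : Fin n) :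
    (f univ : ℤ) - f (univ \ {i}) ≤ a i := by
  have := sum_le_of_mem_PB ha (univ \ {i})
  rw [sum_compl_singleton, tight_univ ha] at this
  omega

theorem apply_le_greedy (hf0 : f ∅ = 0) (hmono : Monotone f) (hsub : IsSubmodular f)
    (ha : a ∈ almostActiveBases f i) : a i ≤ greedy f i := by
  obtain ⟨ha, hact⟩ := mem_almostActiveBases.1 ha
  have hsuf : Tight f a (suffix n (i + 1)) := tight_suffix hf0 hmono hsub ha i.isLt
    fun k hk => hact k (by rintro rfl; omega)
  have hle := sum_le_of_mem_PB ha (suffix n i)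
  unfold Tight at hsuf
  rw [sum_suffix i.isLt, Fin.eta, hsuf] at hle
  simp only [greedy]
  omega

/-- Otherwise `univ \ {i}` would be the union of the minimal tight sets of its elements. -/
theorem exists_lt_mem_minTight (hf0 : f ∅ = 0) (hsub : IsSubmodular f) (ha : a ∈ PB n f)
    (hnt : ¬ Tight f a (univ \ {i})) (hfar : ∀ k, i < k → i ∉ minTight f a k) :
    ∃ j < i, i ∈ minTight f a j := by
  by_contra! h
  refine hnt (tight_of_forall_minTight_subset hf0 hsub ha fun k hk l hl => ?_)
  simp only [mem_sdiff, mem_univ, mem_singleton, true_and] at hk ⊢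
  intro hli
  subst hli
  exact (Ne.lt_or_gt hk).elim (fun hki => h k hki hl) fun hik => hfar k hik hl

/-- For the moved vector, activity of `k` is witnessed by the tight set `minTight f a k` if it
avoids `i`, and by `minTight f a k ∪ minTight f a j` otherwise, in which case `k ≤ j`. -/
theorem extAct_add_single_sub_single (hsub : IsSubmodular f) (ha : a ∈ PB n f)
    (hact : ∀ k, k ≠ i → ExtAct f a k) (hji : j < i) (hj : i ∈ minTight f a j)
    (hmax : ∀ k, j < k → k ≠ i → i ∉ minTight f a k)
    (ha' : a + Pi.single j 1 - Pi.single i 1 ∈ PB n f) (hki : k ≠ i) :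
    ExtAct f (a + Pi.single j 1 - Pi.single i 1) k := by
  have happ : ∀ x, x ≠ j →
      (a + Pi.single j 1 - Pi.single i 1 : Fin n → ℤ) x = a x - if x = i then 1 else 0 :=
    fun x hxj => by simp [Pi.single_apply, hxj]
  rw [extAct_iff ha']
  intro l hlk hl hlk'
  by_cases hik : i ∈ minTight f a k
  · have hlj : l < j := hlk.trans_le (not_lt.1 fun hjk => hmax k hjk hki hik)
    have hal : 0 < a l := by
      rwa [happ l hlj.ne, if_neg (hlj.trans hji).ne, sub_zero] at hl
    have hT := (tight_union_inter hsub ha (tight_minTight (k := k) hsub ha)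
      (tight_minTight (k := j) hsub ha)).1
    have hT' := tight_add_single_sub_single hT
      (iff_of_true (mem_union_right _ mem_minTight_self) (mem_union_left _ hik))
    rcases mem_union.1 (minTight_subset hT' (mem_union_left _ mem_minTight_self) hlk') with h | h
    · exact (extAct_iff ha).1 (hact k hki) l hlk hal h
    · exact (extAct_iff ha).1 (hact j hji.ne) l hlj hal h
  · have hjk : j ∉ minTight f a k := fun h => hik (minTight_subset_of_mem hsub ha h hj)
    have hT' := tight_add_single_sub_single (tight_minTight (k := k) hsub ha)
      (iff_of_false hjk hik)
    have hlT := minTight_subset hT' mem_minTight_self hlk'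
    by_cases hlj : l = j
    · exact hjk (hlj ▸ hlT)
    · have hal : 0 < a l := by
        rw [happ l hlj] at hl
        split_ifs at hl <;> omega
      exact (extAct_iff ha).1 (hact k hki) l hlk hal hlT

theorem exists_mem_almostActiveBases_apply_eq_sub_one (hf0 : f ∅ = 0) (hmono : Monotone f)
    (hsub : IsSubmodular f) (ha : a ∈ almostActiveBases f i)
    (hlo : (f univ : ℤ) - f (univ \ {i}) < a i) :
    ∃ a' ∈ almostActiveBases f i, a' i = a i - 1 := by
  obtain ⟨ha, hact⟩ := mem_almostActiveBases.1 ha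
  have hsuf : Tight f a (suffix n (i + 1)) := tight_suffix hf0 hmono hsub ha i.isLt
    fun k hk => hact k (by rintro rfl; omega)
  have hfar : ∀ k, i < k → i ∉ minTight f a k := fun k hik hi => by
    have := mem_suffix.1 (minTight_subset hsuf (mem_suffix.2 (Fin.lt_def.1 hik)) hi)
    omega
  have hnt : ¬ Tight f a (univ \ {i}) := fun h => by
    unfold Tight at h
    rw [sum_compl_singleton, tight_univ ha] at h
    omega
  obtain ⟨j, hj, hjmax⟩ := (univ.filter fun j => j < i ∧ i ∈ minTight f a j).exists_max_image id
    (by simpa [Finset.Nonempty] using exists_lt_mem_minTight hf0 hsub ha hnt hfar)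
  simp only [mem_filter, mem_univ, true_and, id] at hj hjmax
  have hmax : ∀ k, j < k → k ≠ i → i ∉ minTight f a k := fun k hjk hki hik =>
    hki.lt_or_gt.elim (fun h => (hjmax k ⟨h, hik⟩).not_gt hjk) fun h => hfar k h hik
  have hai : 0 < a i := by
    have : f (univ \ {i}) ≤ f univ := hmono (subset_univ _)
    omega
  have ha' := (add_single_sub_single_mem_PB_iff ha hj.1.ne).2 ⟨hai, hj.2⟩
  refine ⟨_, mem_almostActiveBases.2
    ⟨ha', fun k hki => extAct_add_single_sub_single hsub ha hact hj.1 hj.2 hmax ha' hki⟩, ?_⟩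
  simp [Pi.single_eq_of_ne hj.1.ne']

theorem image_apply_almostActiveBases (hf0 : f ∅ = 0) (hmono : Monotone f)
    (hsub : IsSubmodular f) (i : Fin n) :
    (almostActiveBases f i).image (· i) = Icc ((f univ : ℤ) - f (univ \ {i})) (greedy f i) := by
  ext v
  simp only [mem_image, mem_Icc]
  constructor
  · rintro ⟨a, ha, rfl⟩
    exact ⟨sub_le_apply_of_mem_PB (mem_almostActiveBases.1 ha).1 i,
      apply_le_greedy hf0 hmono hsub ha⟩
  · rintro ⟨hlo, hhi⟩
    induction v, hhi using Int.leInductionDown with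
    | base => exact ⟨greedy f, greedy_mem_almostActiveBases hf0 hmono hsub i, rfl⟩
    | pred v _ ih =>
      obtain ⟨a, ha, rfl⟩ := ih (by omega)
      exact exists_mem_almostActiveBases_apply_eq_sub_one hf0 hmono hsub ha (by omega)

theorem card_almostActiveBases (hf0 : f ∅ = 0) (hmono : Monotone f) (hsub : IsSubmodular f)
    (i : Fin n) :
    ((almostActiveBases f i).card : ℤ) = greedy f i - (f univ - f (univ \ {i})) + 1 := by
  have hinj : Set.InjOn (· i) (almostActiveBases f i : Set (Fin n → ℤ)) := fun a ha b hb hab =>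
    have ha := mem_almostActiveBases.1 ha
    have hb := mem_almostActiveBases.1 hb
    eq_of_forall_extAct_of_apply_eq hsub ha.1 hb.1 ha.2 hb.2 hab
  have hlo := sub_le_apply_of_mem_PB (greedy_mem_PB hf0 hmono hsub) i
  rw [← card_image_of_injOn hinj, image_apply_almostActiveBases hf0 hmono hsub, Int.card_Icc,
    Int.toNat_of_nonneg (by omega)]
  ring

theorem mem_erase_greedy_almostActiveBases (hf0 : f ∅ = 0) (hmono : Monotone f)
    (hsub : IsSubmodular f) :
    a ∈ (almostActiveBases f i).erase (greedy f) ↔ a ∈ PB n f ∧ ∀ k, ExtAct f a k ↔ k ≠ i := by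
  rw [mem_erase, mem_almostActiveBases]
  constructor
  · rintro ⟨hne, ha, hact⟩
    refine ⟨ha, fun k => ⟨fun hk hki => hne ?_, hact k⟩⟩
    refine eq_greedy_of_forall_extAct hf0 hmono hsub ha fun k' => ?_
    by_cases hk' : k' = i
    · exact hk' ▸ hki ▸ hk
    · exact hact k' hk'
  · rintro ⟨ha, hact⟩
    exact ⟨fun h => (hact i).1 (h ▸ extAct_greedy hf0 hmono hsub i) rfl, ha, fun k => (hact k).2⟩

theorem eps_eq_sub_one_iff (hn : 0 < n) : eps f a = n - 1 ↔ ∃ i, ∀ k, ExtAct f a k ↔ k ≠ i := by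
  have : Nonempty (Fin n) := ⟨⟨0, hn⟩⟩
  have h := card_eq_card_sub_one_iff (s := ExtSet f a)
  rw [Fintype.card_fin] at h
  rw [eps, h]
  simp only [Finset.ext_iff, ExtSet, mem_filter, mem_univ, true_and, mem_erase, and_true]

theorem card_filter_eps_eq_sub_one (hn : 0 < n) (hf0 : f ∅ = 0) (hmono : Monotone f)
    (hsub : IsSubmodular f) :
    ((PB n f).filter fun a => eps f a = n - 1).card =
      ∑ i, ((almostActiveBases f i).erase (greedy f)).card := by
  have hbiUnion : (PB n f).filter (fun a => eps f a = n - 1) =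
      univ.biUnion fun i => (almostActiveBases f i).erase (greedy f) := by
    ext a
    simp only [mem_filter, mem_biUnion, mem_univ, true_and,
      mem_erase_greedy_almostActiveBases hf0 hmono hsub, eps_eq_sub_one_iff hn, exists_and_left]
  rw [hbiUnion, card_biUnion fun i _ j _ hij => disjoint_left.2 fun a hi hj => ?_]
  rw [mem_erase_greedy_almostActiveBases hf0 hmono hsub] at hi hj
  exact (hi.2 i).1 ((hj.2 i).2 hij) rfl

theorem card_erase_greedy_almostActiveBases (hf0 : f ∅ = 0) (hmono : Monotone f)
    (hsub : IsSubmodular f) (i : Fin n) :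
    (((almostActiveBases f i).erase (greedy f)).card : ℤ) =
      greedy f i - (f univ - f (univ \ {i})) := by
  have hg := greedy_mem_almostActiveBases hf0 hmono hsub i
  rw [card_erase_of_mem hg, Nat.cast_sub (card_pos.2 ⟨_, hg⟩),
    card_almostActiveBases hf0 hmono hsub]
  ring

end Polymatroid

open Polymatroid

open scoped Classical in
/-- The coefficient of `y^(n-1)` in `J_P(1,y)`, i.e. the number of bases with
`ε(a) = n - 1`, equals `Σ_i f([n] ∖ {i}) - (n-1)·f([n])`. -/
theorem coeff_subtop_ext
    (n : ℕ) (hn : 0 < n) (f : Finset (Fin n) → ℕ)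
    (hf0 : f ∅ = 0)
    (hmono : ∀ I J : Finset (Fin n), I ⊆ J → f I ≤ f J)
    (hsub : ∀ I J : Finset (Fin n), f (I ∪ J) + f (I ∩ J) ≤ f I + f J) :
    (((PB n f).filter fun a => eps f a = n - 1).card : ℤ) =
      (∑ i : Fin n, (f (Finset.univ \ {i}) : ℤ)) - ((n : ℤ) - 1) * (f Finset.univ : ℤ) := by
  have hmono : Monotone f := fun I J => hmono I J
  rw [card_filter_eps_eq_sub_one hn hf0 hmono hsub, Nat.cast_sum,
    sum_congr rfl fun i _ => card_erase_greedy_almostActiveBases hf0 hmono hsub i,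
    sum_sub_distrib, sum_greedy hf0, sum_sub_distrib, sum_const, card_univ, Fintype.card_fin,
    nsmul_eq_mul]
  ring
end

section
/- Define a^max ∈ ℤ^n by a^max_k = f([k]) − f([k−1]) for each k ∈ [n] (where [0] = ∅). Then every basis b ∈ PB with b ≠ a^max satisfies ι(b) < n, i.e. some index of [n] is not internally active with respect to b. -/
/-!
If every index is internally active for the basis `b`, then every prefix `[i]` is tight, and
tight prefixes force `b = a^max`. The prefixes are handled in increasing order. Tight sets are
closed under `∪` and `∩` by submodularity, so there is a smallest tight set `T` containing `i`.
A `k > i` in `T` with `b k > 0` is impossible: no tight set separates `i` from `k`, so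
`b - e_k + e_i` would be a basis and `k` would not be internally active. Hence the tight set
`T ∪ [i-1]` carries no mass outside `[i]`, and monotonicity of `f` makes `[i]` tight.
-/

open Finset

variable {n : ℕ}

theorem Finset.sup_Iio_Iic {α : Type*} [Preorder α] [LocallyFiniteOrderBot α] [DecidableEq α]
    (i : α) : (Iio i).sup Iic = Iio i := by
  ext x
  simp only [mem_sup, mem_Iio, mem_Iic]
  exact ⟨fun ⟨j, hji, hxj⟩ => hxj.trans_lt hji, fun hxi => ⟨x, hxi, le_rfl⟩⟩

namespace PB

variable {f : Finset (Fin n) → ℕ} {b : Fin n → ℤ}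

theorem mem_iff :
    b ∈ PB n f ↔
      (∀ i, 0 ≤ b i) ∧ (∀ I : Finset (Fin n), ∑ j ∈ I, b j ≤ f I) ∧ ∑ j, b j = f univ := by
  simp only [PB, mem_filter, Fintype.mem_piFinset, mem_Icc]
  refine ⟨fun ⟨hbox, hcon⟩ => ⟨fun i => (hbox i).1, hcon⟩,
    fun ⟨hnonneg, hcon, htot⟩ => ⟨fun i => ⟨hnonneg i, ?_⟩, hcon, htot⟩⟩
  simpa using hcon {i}

theorem tight_union_and_tight_inter
    (hsub : ∀ I J : Finset (Fin n), f (I ∪ J) + f (I ∩ J) ≤ f I + f J) (hb : b ∈ PB n f)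
    {S T : Finset (Fin n)} (hS : Tight f b S) (hT : Tight f b T) :
    Tight f b (S ∪ T) ∧ Tight f b (S ∩ T) := by
  obtain ⟨-, hcon, -⟩ := mem_iff.mp hb
  have hsum : ∑ j ∈ S ∪ T, b j + ∑ j ∈ S ∩ T, b j = ∑ j ∈ S, b j + ∑ j ∈ T, b j :=
    sum_union_inter
  have hf : ((f (S ∪ T) + f (S ∩ T) : ℕ) : ℤ) ≤ (f S + f T : ℕ) := by exact_mod_cast hsub S T
  unfold Tight at *
  push_cast at hf
  constructor <;> linarith [hcon (S ∪ T), hcon (S ∩ T)]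

theorem exists_minimal_tight
    (hsub : ∀ I J : Finset (Fin n), f (I ∪ J) + f (I ∩ J) ≤ f I + f J) (hb : b ∈ PB n f)
    (i : Fin n) : ∃ T, Tight f b T ∧ i ∈ T ∧ ∀ S, Tight f b S → i ∈ S → T ⊆ S := by
  classical
  set F := univ.filter fun S : Finset (Fin n) => Tight f b S ∧ i ∈ S
  have hT : Tight f b (F.inf id) ∧ i ∈ F.inf id :=
    inf_induction (p := fun S => Tight f b S ∧ i ∈ S) ⟨(mem_iff.mp hb).2.2, mem_univ i⟩
      (fun S hS S' hS' =>
        ⟨(tight_union_and_tight_inter hsub hb hS.1 hS'.1).2, mem_inter.mpr ⟨hS.2, hS'.2⟩⟩)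
      (fun S hS => (mem_filter.mp hS).2)
  exact ⟨F.inf id, hT.1, hT.2, fun S hS hiS =>
    inf_le (f := id) (mem_filter.mpr ⟨mem_univ S, hS, hiS⟩)⟩

theorem sum_sub_single_add_single (b : Fin n → ℤ) (k i : Fin n) (I : Finset (Fin n)) :
    ∑ j ∈ I, (b - Pi.single k 1 + Pi.single i 1 : Fin n → ℤ) j
      = ∑ j ∈ I, b j - (if k ∈ I then 1 else 0) + (if i ∈ I then 1 else 0) := by
  simp [sum_add_distrib, sum_sub_distrib, sum_pi_single']

theorem sub_single_add_single_mem (hb : b ∈ PB n f) {i k : Fin n} (hik : i ≠ k) (hbk : 0 < b k)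
    (hsep : ∀ I, i ∈ I → k ∉ I → ¬ Tight f b I) :
    b - Pi.single k 1 + Pi.single i 1 ∈ PB n f := by
  obtain ⟨hnonneg, hcon, htot⟩ := mem_iff.mp hb
  refine mem_iff.mpr ⟨fun j => ?_, fun I => ?_, ?_⟩
  · simp only [Pi.add_apply, Pi.sub_apply, Pi.single_apply]
    have := hnonneg j
    split_ifs with hjk <;> subst_vars <;> omega
  · rw [sum_sub_single_add_single]
    have := hcon I
    by_cases hiI : i ∈ I <;> by_cases hkI : k ∈ I <;> simp only [hiI, hkI, if_true, if_false]
    all_goals first | omega | have := lt_of_le_of_ne (hcon I) (hsep I hiI hkI); omega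
  · simpa [htot] using sum_sub_single_add_single b k i univ

theorem tight_Iio (hf0 : f ∅ = 0)
    (hsub : ∀ I J : Finset (Fin n), f (I ∪ J) + f (I ∩ J) ≤ f I + f J) (hb : b ∈ PB n f)
    {i : Fin n} (h : ∀ j < i, Tight f b (Iic j)) : Tight f b (Iio i) := by
  rw [← Finset.sup_Iio_Iic]
  exact sup_induction (by simp [Tight, hf0])
    (fun S hS T hT => (tight_union_and_tight_inter hsub hb hS hT).1)
    (fun j hj => h j (mem_Iio.mp hj))

theorem tight_Iic_of_tight_Iio (hmono : ∀ I J : Finset (Fin n), I ⊆ J → f I ≤ f J)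
    (hsub : ∀ I J : Finset (Fin n), f (I ∪ J) + f (I ∩ J) ≤ f I + f J) (hb : b ∈ PB n f)
    {i : Fin n} (hact : ∀ k, i < k → IntAct f b k) (hIio : Tight f b (Iio i)) :
    Tight f b (Iic i) := by
  obtain ⟨T, hT, hiT, hTmin⟩ := exists_minimal_tight hsub hb i
  have hzero : ∀ k ∈ T, i < k → b k = 0 := by
    intro k hkT hik
    refine le_antisymm (not_lt.mp fun hbk => hact k hik i hik ?_) ((mem_iff.mp hb).1 k)
    exact sub_single_add_single_mem hb hik.ne hbk fun I hiI hkI hI => hkI (hTmin I hI hiI hkT)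
  have hIic : Iic i ⊆ T ∪ Iio i := fun x hx => by
    rcases (mem_Iic.mp hx).lt_or_eq with hxi | rfl
    · exact mem_union_right _ (mem_Iio.mpr hxi)
    · exact mem_union_left _ hiT
  have hsum : ∑ j ∈ Iic i, b j = ∑ j ∈ T ∪ Iio i, b j := by
    refine sum_subset hIic fun x hxU hx => ?_
    have hix : i < x := not_le.mp (mt mem_Iic.mpr hx)
    exact hzero x ((mem_union.mp hxU).resolve_right (by simpa using hix.le)) hix
  refine le_antisymm ((mem_iff.mp hb).2.1 _) ?_
  calc (f (Iic i) : ℤ) ≤ f (T ∪ Iio i) := by exact_mod_cast hmono _ _ hIic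
    _ = ∑ j ∈ Iic i, b j := by rw [hsum, (tight_union_and_tight_inter hsub hb hT hIio).1]

theorem tight_Iic_of_forall_intAct (hf0 : f ∅ = 0)
    (hmono : ∀ I J : Finset (Fin n), I ⊆ J → f I ≤ f J)
    (hsub : ∀ I J : Finset (Fin n), f (I ∪ J) + f (I ∩ J) ≤ f I + f J) (hb : b ∈ PB n f)
    (hact : ∀ i, IntAct f b i) (i : Fin n) : Tight f b (Iic i) := by
  induction i using WellFoundedLT.induction with
  | _ i ih =>
    exact tight_Iic_of_tight_Iio hmono hsub hb (fun k _ => hact k) (tight_Iio hf0 hsub hb ih)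

theorem eq_of_forall_tight_Iic (hf0 : f ∅ = 0)
    (hsub : ∀ I J : Finset (Fin n), f (I ∪ J) + f (I ∩ J) ≤ f I + f J) (hb : b ∈ PB n f)
    (h : ∀ i, Tight f b (Iic i)) : b = fun k => (f (Iic k) : ℤ) - f (Iio k) := by
  funext k
  rw [← h k, ← tight_Iio hf0 hsub hb fun j _ => h j, ← Iio_insert, sum_insert (by simp)]
  ring

end PB

theorem forall_intAct_of_le_iota {f : Finset (Fin n) → ℕ} {b : Fin n → ℤ} (h : n ≤ iota f b)
    (i : Fin n) : IntAct f b i := by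
  have hall : IntSet f b = univ := eq_univ_of_card _ <|
    le_antisymm (by simpa using card_le_univ (IntSet f b)) (by simpa [iota] using h)
  classical
  exact (mem_filter.mp (hall ▸ mem_univ i)).2

theorem iota_lt_of_ne_amax_general
    (n : ℕ) (f : Finset (Fin n) → ℕ)
    (hf0 : f ∅ = 0)
    (hmono : ∀ I J : Finset (Fin n), I ⊆ J → f I ≤ f J)
    (hsub : ∀ I J : Finset (Fin n), f (I ∪ J) + f (I ∩ J) ≤ f I + f J)
    (b : Fin n → ℤ) (hb : b ∈ PB n f)
    (hne : b ≠ fun k : Fin n => (f (Finset.Iic k) : ℤ) - (f (Finset.Iio k) : ℤ)) :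
    iota f b < n := by
  by_contra! h
  exact hne <| PB.eq_of_forall_tight_Iic hf0 hsub hb <|
    PB.tight_Iic_of_forall_intAct hf0 hmono hsub hb (forall_intAct_of_le_iota h)

/-- Every basis other than `a^max` (given by `a^max_k = f([k]) - f([k-1])`) has
internal activity less than `n`. -/
theorem iota_lt_of_ne_amax
    (n : ℕ) (hn : 0 < n) (f : Finset (Fin n) → ℕ)
    (hf0 : f ∅ = 0)
    (hmono : ∀ I J : Finset (Fin n), I ⊆ J → f I ≤ f J)
    (hsub : ∀ I J : Finset (Fin n), f (I ∪ J) + f (I ∩ J) ≤ f I + f J)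
    (b : Fin n → ℤ) (hb : b ∈ PB n f)
    (hne : b ≠ fun k : Fin n => (f (Finset.Iic k) : ℤ) - (f (Finset.Iio k) : ℤ)) :
    iota f b < n :=
  iota_lt_of_ne_amax_general n f hf0 hmono hsub b hb hne
end
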